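/- Let G be a finite group, F a group, (F, G, ◁, ▷) a matched pair, σ cocycle data and τ trivial, and suppose the Hopf algebra H = k^G τ#_σ kF admits a coquasitriangular structure. Let W with basis {w^(1), …, w^(n)} be a simple right comodule over the coalgebra k^G, with coaction ρ(w^(j)) = Σ_{k=1}^n w^(k) ⊗ (Σ_{h∈G} b^h_{kj} p_h), where b^h_{kj} ∈ k. Then for every f ∈ F, g ∈ G_f and z ∈ T_f: Σ_{j=1}^n b^{(z⁻¹ g z) ◁ (z⁻¹ ▷ f)}_{jj} = Σ_{j=1}^n b^{z⁻¹ g z}_{jj}. -/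

import Mathlib

/-- A matched pair of groups `(F, G, ◁, ▷)`: `rtr g f = g ▷ f` is an action of the
group `G` on the set `F`, and `ltl g f = g ◁ f` is an action of the group `F` on the
set `G`, satisfying the matched pair compatibility conditions. -/
structure MatchedPair (F G : Type*) [Group F] [Group G] where
  rtr : G → F → F
  ltl : G → F → G
  one_rtr : ∀ f, rtr 1 f = f
  mul_rtr : ∀ g g' f, rtr (g * g') f = rtr g (rtr g' f)
  ltl_one : ∀ g, ltl g 1 = g
  ltl_mul : ∀ g f f', ltl g (f * f') = ltl (ltl g f) f'
  rtr_mul : ∀ g f f', rtr g (f * f') = rtr g f * rtr (ltl g f) f'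
  mul_ltl : ∀ g g' f, ltl (g * g') f = ltl g (rtr g' f) * ltl g' f

/-- Cocycle data `(σ, τ)` for the abelian extension `k^G τ#_σ kF`. -/
structure CocycleData (k F G : Type*) [Field k] [Group F] [Group G]
    (mp : MatchedPair F G) where
  sig : G → F → F → kˣ
  tau : G → G → F → kˣ
  sig_one_left : ∀ g f, sig g 1 f = 1
  sig_one_right : ∀ g f, sig g f 1 = 1
  one_sig : ∀ f f', sig 1 f f' = 1
  sig_cocycle : ∀ g f f' f'',
    sig (mp.ltl g f) f' f'' * sig g f (f' * f'') = sig g f f' * sig g (f * f') f''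
  one_tau : ∀ g f, tau 1 g f = 1
  tau_one : ∀ g f, tau g 1 f = 1
  tau_one_right : ∀ g g', tau g g' 1 = 1
  tau_cocycle : ∀ g g' g'' f,
    tau g g' (mp.rtr g'' f) * tau (g * g') g'' f = tau g (g' * g'') f * tau g' g'' f
  compat : ∀ g g' f f',
    sig (g * g') f f' * tau g g' (f * f')
      = sig g (mp.rtr g' f) (mp.rtr (mp.ltl g' f) f') * sig g' f f' * tau g g' f
        * tau (mp.ltl g (mp.rtr g' f)) (mp.ltl g' f) f'

/-- The product `(p_g # f)(p_{g'} # f') = δ_{g ◁ f, g'} σ(g; f, f') p_g # (f f')` of two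
basis elements of `H = k^G τ#_σ kF`, as an element of `H` (realized as `(G × F) →₀ k`). -/
noncomputable def mulB {k F G : Type*} [Field k] [Group F] [Group G] [DecidableEq G]
    (mp : MatchedPair F G) (cd : CocycleData k F G mp) (i j : G × F) : (G × F) →₀ k :=
  if mp.ltl i.1 i.2 = j.1 then
    Finsupp.single (i.1, i.2 * j.2) ((cd.sig i.1 i.2 j.2 : kˣ) : k)
  else 0

/-- `R` (given by its values `R g f h f' = R(p_g # f, p_h # f')` on the basis
`{p_g # f}` of `H = k^G τ#_σ kF`) is a coquasitriangular structure on `H`: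
it is convolution invertible, satisfies `R(a, bc) = Σ R(a₁, c) R(a₂, b)` and
`R(ab, c) = Σ R(a, c₁) R(b, c₂)`, and the quasi-commutativity axiom
`Σ R(a₁, b₁) a₂ b₂ = Σ b₁ a₁ R(a₂, b₂)`, all expressed on basis elements using
`Δ(p_g # f) = Σ_x τ(g x⁻¹, x; f) (p_{g x⁻¹} # (x ▷ f)) ⊗ (p_x # f)` and
`ε(p_g # f) = δ_{g,1}`. -/
structure IsCQT {k F G : Type*} [Field k] [Group F] [Group G] [Fintype G] [DecidableEq G]
    (mp : MatchedPair F G) (cd : CocycleData k F G mp)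
    (R : G → F → G → F → k) : Prop where
  conv_inv : ∃ R' : G → F → G → F → k,
    (∀ (g h : G) (f f' : F),
      ∑ x : G, ∑ y : G,
        ((cd.tau (g * x⁻¹) x f : kˣ) : k) * ((cd.tau (h * y⁻¹) y f' : kˣ) : k) *
          R (g * x⁻¹) (mp.rtr x f) (h * y⁻¹) (mp.rtr y f') * R' x f y f'
        = (if g = 1 then (1 : k) else 0) * (if h = 1 then (1 : k) else 0)) ∧
    (∀ (g h : G) (f f' : F),
      ∑ x : G, ∑ y : G,
        ((cd.tau (g * x⁻¹) x f : kˣ) : k) * ((cd.tau (h * y⁻¹) y f' : kˣ) : k) *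
          R' (g * x⁻¹) (mp.rtr x f) (h * y⁻¹) (mp.rtr y f') * R x f y f'
        = (if g = 1 then (1 : k) else 0) * (if h = 1 then (1 : k) else 0))
  cqt1 : ∀ (g h l : G) (f f' f'' : F),
    (if mp.ltl h f' = l then (1 : k) else 0) * ((cd.sig h f' f'' : kˣ) : k)
        * R g f h (f' * f'')
      = ∑ x : G, ((cd.tau (g * x⁻¹) x f : kˣ) : k)
          * R (g * x⁻¹) (mp.rtr x f) l f'' * R x f h f'
  cqt2 : ∀ (g h l : G) (f f' f'' : F),
    (if mp.ltl g f = h then (1 : k) else 0) * ((cd.sig g f f' : kˣ) : k)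
        * R g (f * f') l f''
      = ∑ x : G, ((cd.tau (l * x⁻¹) x f'' : kˣ) : k)
          * R g f (l * x⁻¹) (mp.rtr x f'') * R h f' x f''
  qcomm : ∀ (g h : G) (f f' : F),
    (∑ x : G, ∑ y : G,
      (((cd.tau (g * x⁻¹) x f : kˣ) : k) * ((cd.tau (h * y⁻¹) y f' : kˣ) : k) *
        R (g * x⁻¹) (mp.rtr x f) (h * y⁻¹) (mp.rtr y f')) • mulB mp cd (x, f) (y, f'))
      = ∑ x : G, ∑ y : G,
        (((cd.tau (g * x⁻¹) x f : kˣ) : k) * ((cd.tau (h * y⁻¹) y f' : kˣ) : k) *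
          R x f y f') • mulB mp cd (h * y⁻¹, mp.rtr y f') (g * x⁻¹, mp.rtr x f)


/-!
With `τ` trivial, quasi-commutativity of `R` on `(p_g # f) ⊗ (p_h # 1)` says that
`R(p_g # f, p_h # 1)` vanishes unless `g ▷ f = f` and is invariant under conjugation in the action
groupoid `G ⋉ F`. Hence the operators `B(g, f) = Σ_h R(p_g # f, p_h # 1) b(h)` intertwine `b(a)`
placed at `a` with `b(a ◁ ·)` placed at `a`, as elements of the groupoid algebra with matrix
coefficients, and convolution invertibility of `R` makes `B` invertible there. A trace on that
algebra supported on the conjugates of the isotropy arrow `(a, f)` then gives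
`|C_G(a)| tr b(a) = |C_G(a)| tr b(a ◁ f)`, and characteristic zero cancels the factor.
-/

lemma trace_map_conj {G ι R : Type*} [Group G] [Fintype ι] [DecidableEq ι] [CommSemiring R]
    (ρ : G →* Matrix ι ι R) (u v : G) : (ρ (u * v * u⁻¹)).trace = (ρ v).trace := by
  rw [map_mul, map_mul, ← ρ.coe_toHomUnits u, ← ρ.coe_toHomUnits u⁻¹, map_inv,
    Matrix.trace_units_conj]

namespace MatchedPair

variable {F G : Type*} [Group F] [Group G] (mp : MatchedPair F G)

lemma rtr_one (g : G) : mp.rtr g 1 = 1 := by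
  simpa [mp.ltl_one] using mp.rtr_mul g 1 1

lemma one_ltl (f : F) : mp.ltl 1 f = 1 := by
  simpa [mp.one_rtr] using mp.mul_ltl 1 1 f

lemma rtr_injective (g : G) : Function.Injective (mp.rtr g) := fun f f' h => by
  simpa [← mp.mul_rtr, mp.one_rtr] using congrArg (mp.rtr g⁻¹) h

lemma rtr_mul_inv_rtr (a g : G) (w : F) :
    mp.rtr (g * a⁻¹) (mp.rtr a w) = mp.rtr a (mp.rtr (a⁻¹ * g) w) := by
  rw [← mp.mul_rtr, ← mp.mul_rtr, inv_mul_cancel_right, mul_inv_cancel_left]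

lemma ltl_rtr_of_commute {a z : G} {f : F} (ha : mp.rtr a f = f) (hc : a * z = z * a) :
    mp.ltl a (mp.rtr z f) = mp.ltl z f * mp.ltl a f * (mp.ltl z f)⁻¹ := by
  have h := mp.mul_ltl z a f
  rw [ha, ← hc, mp.mul_ltl] at h
  rw [← h]
  group

variable [Fintype G] {A : Type*} [Semiring A]

/-- Multiplication in the algebra of the action groupoid `G ⋉ F` with coefficients in `A`. -/
def conv (Φ Ψ : G → F → A) : G → F → A :=
  fun g w => ∑ x, Φ (g * x⁻¹) (mp.rtr x w) * Ψ x w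

def convOne [DecidableEq G] : G → F → A :=
  fun g _ => if g = 1 then 1 else 0

lemma conv_assoc (Φ Ψ Ξ : G → F → A) :
    mp.conv (mp.conv Φ Ψ) Ξ = mp.conv Φ (mp.conv Ψ Ξ) := by
  funext g w
  simp only [conv, Finset.sum_mul, Finset.mul_sum]
  conv_rhs => rw [Finset.sum_comm]
  refine Finset.sum_congr rfl fun x _ => Fintype.sum_equiv (Equiv.mulRight x) _ _ fun y => ?_
  simp only [Equiv.coe_mulRight, mul_inv_rev, ← mp.mul_rtr, mul_assoc, mul_inv_cancel, mul_one]

section conjTrace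

variable {ι R : Type*} [Fintype ι] [DecidableEq ι] [CommSemiring R]

def conjTrace (a : G) (f : F) (Φ : G → F → Matrix ι ι R) : R :=
  ∑ z, (Φ (z * a * z⁻¹) (mp.rtr z f)).trace

lemma conjTrace_conv_comm {a : G} {f : F} (ha : mp.rtr a f = f) (Φ Ψ : G → F → Matrix ι ι R) :
    mp.conjTrace a f (mp.conv Φ Ψ) = mp.conjTrace a f (mp.conv Ψ Φ) := by
  simp only [conjTrace, conv, Matrix.trace_sum]
  rw [← Finset.sum_product', ← Finset.sum_product']
  refine Finset.sum_nbij' (fun p => (p.2 * p.1, p.1 * a * p.1⁻¹ * p.2⁻¹))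
    (fun p => ((p.1 * a * p.1⁻¹ * p.2⁻¹)⁻¹ * p.1, p.1 * a * p.1⁻¹ * p.2⁻¹))
    (fun _ _ => Finset.mem_univ _) (fun _ _ => Finset.mem_univ _)
    (fun _ _ => Prod.ext (by dsimp only; group) (by dsimp only; group))
    (fun _ _ => Prod.ext (by dsimp only; group) (by dsimp only; group)) ?_
  rintro ⟨z, x⟩ -
  have hx : x * z * a * (x * z)⁻¹ * (z * a * z⁻¹ * x⁻¹)⁻¹ = x := by group
  have hw : mp.rtr (z * a * z⁻¹ * x⁻¹) (mp.rtr (x * z) f) = mp.rtr z f := by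
    rw [← mp.mul_rtr, show z * a * z⁻¹ * x⁻¹ * (x * z) = z * a by group, mp.mul_rtr, ha]
  rw [hx, hw, mp.mul_rtr, Matrix.trace_mul_comm]

end conjTrace

variable [DecidableEq G]

lemma convOne_conv (Φ : G → F → A) : mp.conv convOne Φ = Φ := by
  funext g w
  rw [conv, Fintype.sum_eq_single g fun x hx => by simp [convOne, mul_inv_eq_one, Ne.symm hx]]
  simp [convOne]

lemma conv_convOne (Φ : G → F → A) : mp.conv Φ convOne = Φ := by
  funext g w
  rw [conv, Fintype.sum_eq_single 1 fun x hx => by simp [convOne, hx]]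
  simp [convOne, mp.one_rtr]

lemma conv_ite_left (a : G) (M : A) (Ψ : G → F → A) (g : G) (w : F) :
    mp.conv (fun g _ => if g = a then M else 0) Ψ g w = M * Ψ (a⁻¹ * g) w := by
  rw [conv, Fintype.sum_eq_single (a⁻¹ * g) fun x hx => ?_]
  · simp
  · rw [if_neg fun h => hx (by rw [← h]; group), zero_mul]

lemma conv_ite_right (a : G) (N : F → A) (Φ : G → F → A) (g : G) (w : F) :
    mp.conv Φ (fun g w => if g = a then N w else 0) g w = Φ (g * a⁻¹) (mp.rtr a w) * N w := by
  rw [conv, Fintype.sum_eq_single a fun x hx => by rw [if_neg hx, mul_zero], if_pos rfl]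

end MatchedPair

section rOperator

variable {k F G ι : Type*} [Field k] [Group F] [Group G] [Fintype G] [Fintype ι] [DecidableEq ι]

/-- The matrix of `w ↦ Σ w₍₀₎ R(p_g # f, w₍₁₎)` on a `k^G`-comodule whose coaction matrices
form `ρ`. -/
def rOperator (R : G → F → G → F → k) (ρ : G →* Matrix ι ι k) (g : G) (f : F) :
    Matrix ι ι k :=
  ∑ h, R g f h 1 • ρ h

lemma conv_rOperator_eq_convOne [DecidableEq G] (mp : MatchedPair F G)
    {R R' : G → F → G → F → k} (ρ : G →* Matrix ι ι k)
    (hinv : ∀ (g h : G) (f : F), ∑ x, ∑ y, R (g * x⁻¹) (mp.rtr x f) (h * y⁻¹) 1 * R' x f y 1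
      = (if g = 1 then 1 else 0) * (if h = 1 then 1 else 0)) :
    mp.conv (rOperator R ρ) (rOperator R' ρ) = MatchedPair.convOne := by
  funext g f
  calc mp.conv (rOperator R ρ) (rOperator R' ρ) g f
      = ∑ x, ∑ y, ∑ h, (R (g * x⁻¹) (mp.rtr x f) h 1 * R' x f y 1) • ρ (h * y) := by
        simp only [MatchedPair.conv, rOperator, Finset.sum_mul, Finset.mul_sum,
          smul_mul_smul_comm, map_mul]
    _ = ∑ x, ∑ y, ∑ h, (R (g * x⁻¹) (mp.rtr x f) (h * y⁻¹) 1 * R' x f y 1) • ρ h := by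
        refine Finset.sum_congr rfl fun x _ => Finset.sum_congr rfl fun y _ => ?_
        exact Fintype.sum_equiv (Equiv.mulRight y) _ _ fun h => by simp
    _ = ∑ h, (∑ x, ∑ y, R (g * x⁻¹) (mp.rtr x f) (h * y⁻¹) 1 * R' x f y 1) • ρ h := by
        simp only [Finset.sum_smul]
        rw [Finset.sum_congr rfl fun x _ => Finset.sum_comm]
        exact Finset.sum_comm
    _ = MatchedPair.convOne g f := by
        simp only [hinv]
        rw [Fintype.sum_eq_single 1 fun h hh => by rw [if_neg hh, mul_zero, zero_smul]]
        by_cases hg : g = 1 <;> simp [hg, MatchedPair.convOne]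

end rOperator

lemma mulB_apply {k F G : Type*} [Field k] [Group F] [Group G] [DecidableEq F] [DecidableEq G]
    (mp : MatchedPair F G) (cd : CocycleData k F G mp) (i j p : G × F) :
    mulB mp cd i j p =
      if mp.ltl i.1 i.2 = j.1 ∧ (i.1, i.2 * j.2) = p then ((cd.sig i.1 i.2 j.2 : kˣ) : k)
      else 0 := by
  unfold mulB
  split_ifs <;> simp_all

namespace IsCQT

variable {k F G : Type*} [Field k] [Group F] [Group G] [Fintype G] [DecidableEq G]
  {mp : MatchedPair F G} {cd : CocycleData k F G mp} {R : G → F → G → F → k}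

/-- Quasi-commutativity for `a = p_g # f`, `b = p_h # 1`, read off at the basis vector `p_z # w`. -/
lemma qcomm_one_apply [DecidableEq F] (hC : IsCQT mp cd R) (htau : ∀ g g' f, cd.tau g g' f = 1)
    (g h z : G) (f w : F) :
    (if f = w then R (g * z⁻¹) (mp.rtr z f) (h * (mp.ltl z f)⁻¹) 1 else 0)
      = if mp.rtr (z⁻¹ * g) f = w then R (z⁻¹ * g) f (z⁻¹ * h) 1 else 0 := by
  have hqc := congrArg (· (z, w)) (hC.qcomm g h f 1)
  simp only [Finsupp.finsetSum_apply, Finsupp.smul_apply, mulB_apply, htau, mp.rtr_one, mp.ltl_one,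
    cd.sig_one_left, cd.sig_one_right, Units.val_one, one_mul, mul_one, smul_eq_mul, mul_ite,
    mul_zero, Prod.mk.injEq] at hqc
  have hleft : ∀ x y : G, (mp.ltl x f = y ∧ x = z ∧ f = w) ↔
      (x = z ∧ y = mp.ltl z f ∧ f = w) := by
    intro x y
    constructor <;> rintro ⟨rfl, rfl, hw⟩ <;> exact ⟨rfl, rfl, hw⟩
  have hright : ∀ x y : G, (h * y⁻¹ = g * x⁻¹ ∧ h * y⁻¹ = z ∧ mp.rtr x f = w) ↔
      (x = z⁻¹ * g ∧ y = z⁻¹ * h ∧ mp.rtr (z⁻¹ * g) f = w) := by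
    intro x y
    constructor
    · rintro ⟨hxy, rfl, hw⟩
      obtain rfl : x = (h * y⁻¹)⁻¹ * g := by rw [hxy]; group
      exact ⟨rfl, by group, hw⟩
    · rintro ⟨rfl, rfl, hw⟩
      exact ⟨by group, by group, hw⟩
  simp only [hleft, hright, ite_and] at hqc
  simpa using hqc

lemma R_eq_zero_of_rtr_ne (hC : IsCQT mp cd R) (htau : ∀ g g' f, cd.tau g g' f = 1)
    {g : G} {f : F} (hgf : mp.rtr g f ≠ f) (h : G) : R g f h 1 = 0 := by
  classical
  simpa [mp.one_ltl, mp.one_rtr, Ne.symm hgf] using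
    (hC.qcomm_one_apply htau g h 1 f (mp.rtr g f)).symm

lemma R_rtr_eq (hC : IsCQT mp cd R) (htau : ∀ g g' f, cd.tau g g' f = 1)
    {g z : G} {f : F} (hst : mp.rtr (z⁻¹ * g) f = f) (h : G) :
    R (g * z⁻¹) (mp.rtr z f) h 1 = R (z⁻¹ * g) f (z⁻¹ * (h * mp.ltl z f)) 1 := by
  classical
  simpa [hst] using hC.qcomm_one_apply htau g (h * mp.ltl z f) z f f

variable {ι : Type*} [Fintype ι] [DecidableEq ι]

lemma rOperator_eq_zero_of_rtr_ne (hC : IsCQT mp cd R) (htau : ∀ g g' f, cd.tau g g' f = 1)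
    (ρ : G →* Matrix ι ι k) {g : G} {f : F} (hgf : mp.rtr g f ≠ f) : rOperator R ρ g f = 0 :=
  Finset.sum_eq_zero fun h _ => by rw [hC.R_eq_zero_of_rtr_ne htau hgf, zero_smul]

lemma mul_rOperator (hC : IsCQT mp cd R) (htau : ∀ g g' f, cd.tau g g' f = 1)
    (ρ : G →* Matrix ι ι k) (a g : G) (w : F) :
    ρ a * rOperator R ρ (a⁻¹ * g) w = rOperator R ρ (g * a⁻¹) (mp.rtr a w) * ρ (mp.ltl a w) := by
  by_cases hst : mp.rtr (a⁻¹ * g) w = w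
  · calc ρ a * rOperator R ρ (a⁻¹ * g) w
        = ∑ h, R (a⁻¹ * g) w h 1 • ρ (a * h) := by
          simp only [rOperator, Finset.mul_sum, mul_smul_comm, map_mul]
      _ = ∑ h, R (a⁻¹ * g) w (a⁻¹ * h) 1 • ρ h :=
          Fintype.sum_equiv (Equiv.mulLeft a) _ _ fun h => by simp
      _ = ∑ h, R (a⁻¹ * g) w (a⁻¹ * (h * mp.ltl a w)) 1 • ρ (h * mp.ltl a w) :=
          (Fintype.sum_equiv (Equiv.mulRight (mp.ltl a w)) _ _ fun h => by simp).symm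
      _ = rOperator R ρ (g * a⁻¹) (mp.rtr a w) * ρ (mp.ltl a w) := by
          simp only [rOperator, Finset.sum_mul, smul_mul_assoc, map_mul, hC.R_rtr_eq htau hst]
  · have hst' : mp.rtr (g * a⁻¹) (mp.rtr a w) ≠ mp.rtr a w := by
      rw [mp.rtr_mul_inv_rtr]
      exact (mp.rtr_injective a).ne hst
    rw [hC.rOperator_eq_zero_of_rtr_ne htau ρ hst, hC.rOperator_eq_zero_of_rtr_ne htau ρ hst',
      mul_zero, zero_mul]

lemma exists_conv_rOperator_inv (hC : IsCQT mp cd R) (htau : ∀ g g' f, cd.tau g g' f = 1)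
    (ρ : G →* Matrix ι ι k) :
    ∃ B : G → F → Matrix ι ι k, mp.conv (rOperator R ρ) B = MatchedPair.convOne ∧
      mp.conv B (rOperator R ρ) = MatchedPair.convOne := by
  obtain ⟨R', hRR', hR'R⟩ := hC.conv_inv
  refine ⟨rOperator R' ρ, conv_rOperator_eq_convOne mp ρ fun g h f => ?_,
    conv_rOperator_eq_convOne mp ρ fun g h f => ?_⟩
  · simpa [htau, mp.rtr_one] using hRR' g h f 1
  · simpa [htau, mp.rtr_one] using hR'R g h f 1

theorem trace_ltl_eq [CharZero k] (hC : IsCQT mp cd R) (htau : ∀ g g' f, cd.tau g g' f = 1)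
    (ρ : G →* Matrix ι ι k) {a : G} {f : F} (ha : mp.rtr a f = f) :
    (ρ (mp.ltl a f)).trace = (ρ a).trace := by
  set B := rOperator R ρ
  obtain ⟨B', hBB', hB'B⟩ := hC.exists_conv_rOperator_inv htau ρ
  set U : G → F → Matrix ι ι k := fun g _ => if g = a then ρ a else 0
  set V : G → F → Matrix ι ι k := fun g w => if g = a then ρ (mp.ltl a w) else 0
  have hUB : mp.conv U B = mp.conv B V := by
    funext g w
    rw [mp.conv_ite_left, mp.conv_ite_right]
    exact hC.mul_rOperator htau ρ a g w
  have hUV : mp.conjTrace a f U = mp.conjTrace a f V := calc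
    mp.conjTrace a f U = mp.conjTrace a f (mp.conv (mp.conv U B) B') := by
      rw [mp.conv_assoc, hBB', mp.conv_convOne]
    _ = mp.conjTrace a f (mp.conv B' (mp.conv B V)) := by
      rw [mp.conjTrace_conv_comm ha, hUB]
    _ = mp.conjTrace a f V := by
      rw [← mp.conv_assoc, hB'B, mp.convOne_conv]
  have hV : ∀ z, z * a * z⁻¹ = a → (ρ (mp.ltl a (mp.rtr z f))).trace = (ρ (mp.ltl a f)).trace :=
    fun z hz => by
      rw [mp.ltl_rtr_of_commute ha (mul_inv_eq_iff_eq_mul.mp hz).symm, trace_map_conj]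
  simp only [U, V, MatchedPair.conjTrace, apply_ite Matrix.trace, Matrix.trace_zero] at hUV
  rw [Finset.sum_congr rfl fun z _ => ite_congr rfl (hV z) fun _ => rfl] at hUV
  have hcentr : ((Finset.univ.filter fun z : G => z * a * z⁻¹ = a).card : k) ≠ 0 :=
    Nat.cast_ne_zero.mpr (Finset.card_ne_zero_of_mem (a := 1) (by simp))
  simp only [Finset.sum_ite, Finset.sum_const, nsmul_eq_mul, mul_zero, add_zero] at hUV
  exact (mul_left_cancel₀ hcentr hUV).symm

end IsCQT

theorem trace_ltl_eq_of_cqt_tau_trivial_general {k F G : Type*} [Field k]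
    [CharZero k] [Group F] [Group G] [Fintype G] [DecidableEq G]
    (mp : MatchedPair F G) (cd : CocycleData k F G mp)
    (htau : ∀ (g g' : G) (f : F), cd.tau g g' f = 1)
    (hR : ∃ R : G → F → G → F → k, IsCQT mp cd R)
    (n : ℕ)
    (b : G → Matrix (Fin n) (Fin n) k)
    (hb1 : b 1 = 1)
    (hbcoassoc : ∀ u w : G, b u * b w = b (u * w)) :
    ∀ (f : F) (T : Set G), (1 : G) ∈ T →
      (∀ x : G, ∃! z : G, z ∈ T ∧ mp.rtr (x * z⁻¹) f = f) →
      ∀ g : G, mp.rtr g f = f → ∀ z ∈ T,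
        (∑ j : Fin n, b (mp.ltl (z⁻¹ * g * z) (mp.rtr z⁻¹ f)) j j)
          = ∑ j : Fin n, b (z⁻¹ * g * z) j j := by
  intro f _ _ _ g hg z _
  obtain ⟨R, hC⟩ := hR
  let ρ : G →* Matrix (Fin n) (Fin n) k :=
    { toFun := b, map_one' := hb1, map_mul' := fun u w => (hbcoassoc u w).symm }
  have hstab : mp.rtr (z⁻¹ * g * z) (mp.rtr z⁻¹ f) = mp.rtr z⁻¹ f := by
    rw [← mp.mul_rtr, mul_inv_cancel_right, mp.mul_rtr, hg]
  exact hC.trace_ltl_eq htau ρ hstab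

/-- Let `τ` be trivial and suppose `H = k^G τ#_σ kF` admits a coquasitriangular
structure. Let `W` (dimension `n`) be a simple right comodule over the coalgebra `k^G`
with coaction matrices `b h` (`(b h) k j = b^h_{kj}`). Then for every `f ∈ F`, every
complete set `T` of representatives of the right cosets of `G_f` in `G` with `1 ∈ T`,
every `g ∈ G_f` and every `z ∈ T`:
`Σ_j b^{(z⁻¹gz) ◁ (z⁻¹ ▷ f)}_{jj} = Σ_j b^{z⁻¹gz}_{jj}`. -/
theorem trace_ltl_eq_of_cqt_tau_trivial {k F G : Type*} [Field k] [IsAlgClosed k]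
    [CharZero k] [Group F] [Group G] [Fintype G] [DecidableEq G]
    (mp : MatchedPair F G) (cd : CocycleData k F G mp)
    (htau : ∀ (g g' : G) (f : F), cd.tau g g' f = 1)
    (hR : ∃ R : G → F → G → F → k, IsCQT mp cd R)
    (n : ℕ) (hn : 0 < n)
    (b : G → Matrix (Fin n) (Fin n) k)
    (hb1 : b 1 = 1)
    (hbcoassoc : ∀ u w : G, b u * b w = b (u * w))
    (hbsimple : ∀ U : Submodule k (Fin n → k),
      (∀ v ∈ U, ∀ u : G, (b u).mulVec v ∈ U) → U = ⊥ ∨ U = ⊤) :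
    ∀ (f : F) (T : Set G), (1 : G) ∈ T →
      (∀ x : G, ∃! z : G, z ∈ T ∧ mp.rtr (x * z⁻¹) f = f) →
      ∀ g : G, mp.rtr g f = f → ∀ z ∈ T,
        (∑ j : Fin n, b (mp.ltl (z⁻¹ * g * z) (mp.rtr z⁻¹ f)) j j)
          = ∑ j : Fin n, b (z⁻¹ * g * z) j j :=
  trace_ltl_eq_of_cqt_tau_trivial_general mp cd htau hR n b hb1 hbcoassoc
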